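/- arXiv:1204.4924 — 7 statements merged into one kernel-verified Lean document; each statement's English description precedes it below -/
import Mathlib

section
/- Let α ∈ ℝ, μ ∈ ℂ, n a natural number, and let p be a nonzero polynomial of degree n such that ψ(x) = e^{-x²/2} x^{α+1/2} p(x²) satisfies -ψ''(x) + (x² + (4α² - 1)/(4x²)) ψ(x) = μ ψ(x) for all x > 0. Then μ = 2(2n + 1 + α). In particular, the energy levels of the closed Hořava–Lifshitz FLRW universe are quantized as E_n = (2n + 1 + α) ω - g_r, where μ = 2(E + g_r)/ω. -/
/-!
Write `ψ = e^{-x²/2} x^β q(x²)` with `β = α + 1/2`. Differentiation preserves this shape,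
lowering `β` by one and replacing `q` by the polynomial `shapeDerivPoly β q`. So the eigenvalue
equation, multiplied by `x²`, becomes a polynomial identity `H(t) = μ t p(t)` in `t = x²`, with
`H = hamiltonianPoly β p`. The coefficient of `t^{n+1}` on the left is `(4n + 2β + 1)` times the
leading coefficient of `p` and on the right `μ` times it, so `μ = 4n + 2β + 1 = 2(2n + 1 + α)`.
-/

open Polynomial Topology Set

section Algebra

variable {R : Type*} [CommRing R]

noncomputable def shapeDerivPoly (β : R) (q : R[X]) : R[X] :=
  C β * q + X * (2 * derivative q - q)

noncomputable def hamiltonianPoly (β : R) (p : R[X]) : R[X] :=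
  X ^ 2 * p + C (β * (β - 1)) * p - shapeDerivPoly (β - 1) (shapeDerivPoly β p)

lemma coeff_X_mul_derivative (p : R[X]) (n : ℕ) :
    (X * derivative p).coeff n = n * p.coeff n := by
  cases n with
  | zero => simp
  | succ m => rw [coeff_X_mul, coeff_derivative]; push_cast; ring

lemma hamiltonianPoly_eq_X_mul (β : R) (p : R[X]) :
    hamiltonianPoly β p = X * (C (2 * β + 1) * p + 4 * (X * derivative p)
      - C (4 * β + 2) * derivative p - 4 * (X * derivative (derivative p))) := by
  simp only [hamiltonianPoly, shapeDerivPoly, derivative_mul, map_ofNat,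
    derivative_C, derivative_X, derivative_ofNat, map_sub, map_add, map_mul, map_one]
  ring

lemma coeff_hamiltonianPoly_succ (β : R) {p : R[X]} {n : ℕ} (hp : p.natDegree ≤ n) :
    (hamiltonianPoly β p).coeff (n + 1) = (4 * n + 2 * β + 1) * p.coeff n := by
  have hvanish : p.coeff (n + 1) = 0 := coeff_eq_zero_of_natDegree_lt (by omega)
  rw [hamiltonianPoly_eq_X_mul, coeff_X_mul]
  simp only [coeff_sub, coeff_add, coeff_C_mul, coeff_ofNat_mul, coeff_X_mul_derivative,
    coeff_derivative, hvanish]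
  ring

end Algebra

section Analysis

open Real

noncomputable def shapeFun (β : ℝ) (q : ℝ[X]) (x : ℝ) : ℝ :=
  exp (-x ^ 2 / 2) * x ^ β * q.eval (x ^ 2)

variable {β : ℝ} {x : ℝ}

lemma hasDerivAt_shapeFun (q : ℝ[X]) (hx : 0 < x) :
    HasDerivAt (shapeFun β q) (shapeFun (β - 1) (shapeDerivPoly β q) x) x := by
  have hsq : HasDerivAt (fun y ↦ y ^ 2) (2 * x) x := by simpa using hasDerivAt_pow 2 x
  have hexp : HasDerivAt (fun y ↦ exp (-y ^ 2 / 2)) (exp (-x ^ 2 / 2) * (-(2 * x) / 2)) x :=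
    (hsq.neg.div_const 2).exp
  have hpow : HasDerivAt (fun y ↦ y ^ β) (β * x ^ (β - 1)) x :=
    hasDerivAt_rpow_const (Or.inl hx.ne')
  have hpoly := (q.hasDerivAt (x ^ 2)).comp x hsq
  have hpow_succ : x ^ β = x ^ (β - 1) * x := by rw [← rpow_add_one hx.ne']; ring_nf
  refine ((hexp.mul hpow).mul hpoly).congr_deriv ?_
  simp only [shapeFun, shapeDerivPoly, eval_add, eval_mul, eval_sub, eval_C, eval_X, eval_ofNat,
    Pi.mul_apply, Function.comp_apply, hpow_succ]
  ring

lemma shapeFun_X_mul (q : ℝ[X]) (hx : 0 < x) :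
    shapeFun (β - 2) (X * q) x = shapeFun β q x := by
  have : x ^ β = x ^ (β - 2) * x ^ 2 := by
    rw [← rpow_natCast, ← rpow_add hx]; norm_num
  simp only [shapeFun, eval_mul, eval_X, this]
  ring

lemma deriv_deriv_ofReal_shapeFun (q : ℝ[X]) (hx : 0 < x) :
    deriv (deriv fun y ↦ (shapeFun β q y : ℂ)) x =
      shapeFun (β - 2) (shapeDerivPoly (β - 1) (shapeDerivPoly β q)) x := by
  have hderiv : deriv (fun y ↦ (shapeFun β q y : ℂ)) =ᶠ[𝓝 x]
      fun y ↦ (shapeFun (β - 1) (shapeDerivPoly β q) y : ℂ) := by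
    filter_upwards [Ioi_mem_nhds hx] with y hy
    exact (hasDerivAt_shapeFun q hy).ofReal_comp.deriv
  rw [hderiv.deriv_eq, (hasDerivAt_shapeFun _ hx).ofReal_comp.deriv, sub_sub, one_add_one_eq_two]

lemma shapeFun_hamiltonianPoly (p : ℝ[X]) (hx : 0 < x) :
    shapeFun (β - 2) (hamiltonianPoly β p) x =
      -shapeFun (β - 2) (shapeDerivPoly (β - 1) (shapeDerivPoly β p)) x
        + (x ^ 2 + β * (β - 1) / x ^ 2) * shapeFun β p x := by
  rw [← shapeFun_X_mul p hx]
  simp only [shapeFun, hamiltonianPoly, eval_sub, eval_add, eval_mul, eval_pow, eval_C, eval_X]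
  field_simp
  ring

lemma eval_hamiltonianPoly_of_eigen {p : ℝ[X]} {μ : ℂ} (hx : 0 < x)
    (h : -deriv (deriv fun y ↦ (shapeFun β p y : ℂ)) x
        + (x ^ 2 + (β * (β - 1) : ℝ) / x ^ 2) * shapeFun β p x = μ * shapeFun β p x) :
    (((hamiltonianPoly β p).eval (x ^ 2) : ℝ) : ℂ) = μ * ((X * p).eval (x ^ 2) : ℝ) := by
  rw [deriv_deriv_ofReal_shapeFun p hx] at h
  have hH :
      (shapeFun (β - 2) (hamiltonianPoly β p) x : ℂ) = μ * shapeFun (β - 2) (X * p) x := by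
    rw [shapeFun_hamiltonianPoly p hx, shapeFun_X_mul p hx, ← h]
    push_cast
    ring
  have hfactor : ((exp (-x ^ 2 / 2) * x ^ (β - 2) : ℝ) : ℂ) ≠ 0 := by
    exact_mod_cast (mul_pos (exp_pos _) (rpow_pos_of_pos hx _)).ne'
  refine mul_left_cancel₀ hfactor ?_
  simpa only [shapeFun, Complex.ofReal_mul, mul_left_comm μ] using hH

end Analysis

lemma map_ofReal_eq_C_mul_of_eval_eq {P Q : ℝ[X]} {μ : ℂ} {s : Set ℝ} (hs : s.Infinite)
    (h : ∀ t ∈ s, ((P.eval t : ℝ) : ℂ) = μ * (Q.eval t : ℝ)) :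
    P.map Complex.ofRealHom = C μ * Q.map Complex.ofRealHom := by
  refine eq_of_infinite_eval_eq _ _ ((hs.image Complex.ofReal_injective.injOn).mono ?_)
  rintro _ ⟨t, ht, rfl⟩
  have heval (R : ℝ[X]) : (R.map Complex.ofRealHom).eval (t : ℂ) = R.eval t :=
    eval_map_apply Complex.ofRealHom t
  simpa only [mem_ofPred_eq, eval_mul, eval_C, heval] using h t ht

/-- If `p` is a nonzero polynomial of degree `n` and `ψ(x) = e^{-x²/2} x^{α+1/2} p(x²)`
satisfies `-ψ'' + (x² + (4α² - 1)/(4x²)) ψ = μ ψ` on `(0,∞)`, then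
`μ = 2(2n + 1 + α)`.  In particular, the energy levels of the closed Hořava–Lifshitz
FLRW universe are quantized: if `μ = 2(E + g_r)/ω` with `ω > 0`, then
`E = (2n + 1 + α) ω - g_r`. -/
theorem eigenvalue_quantization (α : ℝ) (μ : ℂ) (n : ℕ) (p : Polynomial ℝ)
    (hp : p.degree = n)
    (ψ : ℝ → ℂ)
    (hψ : ∀ x : ℝ, ψ x = Complex.exp (-(x:ℂ)^2/2) * ((x ^ (α + 1/2) : ℝ) : ℂ)
        * ((p.eval (x^2) : ℝ) : ℂ))
    (heq : ∀ x > (0:ℝ),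
      -(deriv (deriv ψ) x) + ((x:ℂ)^2 + (4*(α:ℂ)^2 - 1)/(4*(x:ℂ)^2)) * ψ x = μ * ψ x) :
    μ = 2*(2*(n:ℂ) + 1 + (α:ℂ)) ∧
      ∀ ω gr E : ℝ, 0 < ω → μ = ((2*(E + gr)/ω : ℝ) : ℂ) →
        E = (2*n + 1 + α)*ω - gr := by
  set β : ℝ := α + 1 / 2 with hβ
  have hψ_eq : ψ = fun x ↦ (shapeFun β p x : ℂ) :=
    funext fun x ↦ by rw [hψ x, shapeFun]; push_cast; ring
  have hpoly : ∀ t ∈ Ioi (0 : ℝ),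
      (((hamiltonianPoly β p).eval t : ℝ) : ℂ) = μ * ((X * p).eval t : ℝ) := by
    intro t ht
    obtain ⟨x, hx, rfl⟩ : ∃ x > 0, x ^ 2 = t :=
      ⟨√t, Real.sqrt_pos.2 ht, Real.sq_sqrt (le_of_lt ht)⟩
    refine eval_hamiltonianPoly_of_eigen hx ?_
    convert hψ_eq ▸ heq x hx using 4
    rw [hβ]; push_cast; ring
  have hdeg : p.natDegree = n := natDegree_eq_of_degree_eq_some hp
  have hlead : p.coeff n ≠ 0 := hdeg ▸ leadingCoeff_ne_zero.2 (by rintro rfl; simp at hp)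
  have hcoeff := congrArg (coeff · (n + 1)) (map_ofReal_eq_C_mul_of_eval_eq (Ioi_infinite 0) hpoly)
  simp only [coeff_map, coeff_C_mul, coeff_X_mul, coeff_hamiltonianPoly_succ β hdeg.le,
    Complex.ofRealHom_eq_coe] at hcoeff
  have hμ : μ = 2 * (2 * (n : ℂ) + 1 + (α : ℂ)) := by
    refine mul_right_cancel₀ (Complex.ofReal_ne_zero.2 hlead) (hcoeff.symm.trans ?_)
    rw [hβ]
    push_cast
    ring
  refine ⟨hμ, fun ω gr E hω hE => ?_⟩
  have hreal : 2 * (E + gr) / ω = 2 * (2 * n + 1 + α) := by exact_mod_cast hE.symm.trans hμ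
  field_simp at hreal
  linarith
end

section
/- Let m > 0 and σ > 0, and define Ψ : ℝ × ℝ → ℂ by Ψ(a,t) = (128σ³/π)^{1/4} · exp((3/2)·Log(m/(m + 2iσt))) · a · exp(-σ m a²/(m + 2iσt)), where Log is the principal branch of the complex logarithm (well defined since m + 2iσt has positive real part). Then: (i) Ψ satisfies the free Schrödinger equation i ∂Ψ/∂t (a,t) = -(1/(2m)) ∂²Ψ/∂a² (a,t) for all (a,t) ∈ ℝ²; (ii) Ψ(a,0) = (128σ³/π)^{1/4} a e^{-σa²} for all a; (iii) Ψ(0,t) = 0 for all t (Dirichlet boundary condition at a = 0). -/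
/-!
The ansatz `Ψ(a,t) = A(t) · a · exp(-β(t) a²)` solves the free Schrödinger equation whenever
`β' = -(2i/m) β²` and `A' = -(3i/m) β A`. This Riccati system is solved by the spreading width
`β = σm/(m + 2iσt)` and the amplitude `A = (m/(m + 2iσt))^{3/2}`, with `β(0) = σ` and `A(0) = 1`.
The principal logarithm in `A` is differentiable because `Re (m/(m + 2iσt)) > 0`.
-/

open Complex

section OddGaussian

variable (β : ℂ)

theorem hasDerivAt_mul_exp_neg_mul_sq (z : ℂ) :
    HasDerivAt (fun w => w * exp (-β * w ^ 2)) ((1 - 2 * β * z ^ 2) * exp (-β * z ^ 2)) z := by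
  have hexp := ((hasDerivAt_pow 2 z).const_mul (-β)).cexp
  refine ((hasDerivAt_id z).mul hexp).congr_deriv ?_
  simp only [id, Nat.cast_ofNat]
  ring

theorem hasDerivAt_one_sub_mul_sq_mul_exp (z : ℂ) :
    HasDerivAt (fun w => (1 - 2 * β * w ^ 2) * exp (-β * w ^ 2))
      ((4 * β ^ 2 * z ^ 3 - 6 * β * z) * exp (-β * z ^ 2)) z := by
  have hexp := ((hasDerivAt_pow 2 z).const_mul (-β)).cexp
  have hpoly := ((hasDerivAt_pow 2 z).const_mul (2 * β)).const_sub 1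
  refine (hpoly.mul hexp).congr_deriv ?_
  simp only [Nat.cast_ofNat]
  ring

theorem deriv_deriv_mul_mul_exp_neg_mul_sq (c : ℂ) (x : ℝ) :
    deriv (deriv fun a : ℝ => c * a * exp (-β * (a : ℂ) ^ 2)) x
      = c * ((4 * β ^ 2 * x ^ 3 - 6 * β * x) * exp (-β * (x : ℂ) ^ 2)) := by
  have hderiv : deriv (fun a : ℝ => c * a * exp (-β * (a : ℂ) ^ 2))
      = fun y : ℝ => c * ((1 - 2 * β * (y : ℂ) ^ 2) * exp (-β * (y : ℂ) ^ 2)) := by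
    funext y
    simpa only [mul_assoc] using
      (((hasDerivAt_mul_exp_neg_mul_sq β y).comp_ofReal).const_mul c).deriv
  rw [hderiv]
  exact (((hasDerivAt_one_sub_mul_sq_mul_exp β x).comp_ofReal).const_mul c).deriv

end OddGaussian

theorem freeSchrodinger_of_odd_gaussian_ansatz {m : ℂ} {A β : ℝ → ℂ} {Ψ : ℝ → ℝ → ℂ}
    (hΨ : ∀ a t, Ψ a t = A t * a * exp (-β t * (a : ℂ) ^ 2)) {t : ℝ}
    (hA : HasDerivAt A (-(3 * I / m) * β t * A t) t)
    (hβ : HasDerivAt β (-(2 * I / m) * β t ^ 2) t) (a : ℝ) :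
    I * deriv (fun t' => Ψ a t') t = -(1 / (2 * m)) * deriv (deriv fun a' => Ψ a' t) a := by
  have htime : HasDerivAt (fun t' => A t' * a * exp (-β t' * (a : ℂ) ^ 2))
      (-(3 * I / m) * β t * A t * a * exp (-β t * (a : ℂ) ^ 2)
        + A t * a * (exp (-β t * (a : ℂ) ^ 2) * (-(-(2 * I / m) * β t ^ 2) * (a : ℂ) ^ 2))) t :=
    (hA.mul_const (a : ℂ)).mul (hβ.neg.mul_const ((a : ℂ) ^ 2)).cexp
  simp only [hΨ]
  rw [htime.deriv, deriv_deriv_mul_mul_exp_neg_mul_sq]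
  linear_combination
    (a * exp (-β t * (a : ℂ) ^ 2) * A t * (-3 * β t / m + 2 * β t ^ 2 * a ^ 2 / m)) * I_sq

theorem ofReal_div_mem_slitPlane {m : ℝ} (hm : m ≠ 0) {w : ℂ} (hw : w.re = m) :
    (m : ℂ) / w ∈ slitPlane := by
  have hw0 : w ≠ 0 := fun h => hm (by simpa [h] using hw.symm)
  refine mem_slitPlane_iff.2 (Or.inl ?_)
  rw [div_re, ofReal_re, ofReal_im, hw, zero_mul, zero_div, add_zero]
  exact div_pos (mul_self_pos.2 hm) (normSq_pos.2 hw0)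

section SpreadingPacket

noncomputable def spreadingWidth (m σ w : ℂ) : ℂ := σ * m / (m + 2 * I * σ * w)

noncomputable def spreadingAmplitude (m σ w : ℂ) : ℂ := exp (3 / 2 * log (m / (m + 2 * I * σ * w)))

variable {m σ w : ℂ}

theorem hasDerivAt_const_add_mul (m c w : ℂ) : HasDerivAt (fun w => m + c * w) c w := by
  simpa using ((hasDerivAt_id w).const_mul c).const_add m

theorem hasDerivAt_spreadingWidth (hw : m + 2 * I * σ * w ≠ 0) :
    HasDerivAt (spreadingWidth m σ) (-(2 * I / m) * spreadingWidth m σ w ^ 2) w := by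
  have hquot := (hasDerivAt_const w (σ * m)).div (hasDerivAt_const_add_mul m (2 * I * σ) w) hw
  refine hquot.congr_deriv ?_
  simp only [spreadingWidth]
  field_simp
  ring

theorem hasDerivAt_spreadingAmplitude (hslit : m / (m + 2 * I * σ * w) ∈ slitPlane) :
    HasDerivAt (spreadingAmplitude m σ)
      (-(3 * I / m) * spreadingWidth m σ w * spreadingAmplitude m σ w) w := by
  have hw : m + 2 * I * σ * w ≠ 0 := (div_ne_zero_iff.1 (slitPlane_ne_zero hslit)).2
  have hratio : HasDerivAt (fun w => m / (m + 2 * I * σ * w))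
      ((0 * (m + 2 * I * σ * w) - m * (2 * I * σ)) / (m + 2 * I * σ * w) ^ 2) w :=
    (hasDerivAt_const w m).div (hasDerivAt_const_add_mul m (2 * I * σ) w) hw
  refine ((hratio.clog hslit).const_mul (3 / 2)).cexp.congr_deriv ?_
  simp only [spreadingWidth, spreadingAmplitude]
  field_simp
  ring

end SpreadingPacket

theorem flat_universe_wave_packet_general (m σ : ℝ) (hm : 0 < m)
    (Ψ : ℝ → ℝ → ℂ)
    (hΨ : ∀ a t : ℝ, Ψ a t
      = (((128*σ^3/Real.pi) ^ ((1:ℝ)/4) : ℝ) : ℂ)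
        * Complex.exp ((3/2) * Complex.log ((m:ℂ)/((m:ℂ) + 2*Complex.I*(σ:ℂ)*(t:ℂ))))
        * (a:ℂ)
        * Complex.exp (-(σ:ℂ)*(m:ℂ)*(a:ℂ)^2/((m:ℂ) + 2*Complex.I*(σ:ℂ)*(t:ℂ)))) :
    (∀ a t : ℝ, Complex.I * deriv (fun t' => Ψ a t') t
        = -(1/(2*(m:ℂ))) * deriv (deriv (fun a' => Ψ a' t)) a) ∧
    (∀ a : ℝ, Ψ a 0 = (((128*σ^3/Real.pi) ^ ((1:ℝ)/4) : ℝ) : ℂ) * (a:ℂ)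
        * Complex.exp (-(σ:ℂ)*(a:ℂ)^2)) ∧
    (∀ t : ℝ, Ψ 0 t = 0) := by
  set C : ℂ := (((128*σ^3/Real.pi) ^ ((1:ℝ)/4) : ℝ) : ℂ)
  have hm0 : (m : ℂ) ≠ 0 := ofReal_ne_zero.2 hm.ne'
  have hre : ∀ t : ℝ, ((m : ℂ) + 2 * I * σ * t).re = m := fun t => by simp
  have hz : ∀ t : ℝ, (m : ℂ) + 2 * I * σ * t ≠ 0 := fun t h => hm.ne (by simpa [h] using hre t)
  have hansatz : ∀ a t : ℝ, Ψ a t = C * spreadingAmplitude m σ t * a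
      * exp (-spreadingWidth m σ t * (a : ℂ) ^ 2) := fun a t => by
    rw [hΨ, spreadingAmplitude, spreadingWidth]
    congr 2
    ring
  refine ⟨fun a t => ?_, fun a => ?_, fun t => by simp [hΨ]⟩
  · have hA :=
      (hasDerivAt_spreadingAmplitude (ofReal_div_mem_slitPlane hm.ne' (hre t))).const_mul C
    exact freeSchrodinger_of_odd_gaussian_ansatz hansatz
      (hA.comp_ofReal.congr_deriv (by ring)) (hasDerivAt_spreadingWidth (hz t)).comp_ofReal a
  · have hz0 : (m : ℂ) + 2 * I * σ * ((0 : ℝ) : ℂ) = m := by simp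
    rw [hΨ, hz0, div_self hm0, log_one, mul_zero, exp_zero, mul_one,
      show -(σ : ℂ) * m * a ^ 2 / m = -σ * a ^ 2 by field_simp]

/-- The evolved Gaussian wave packet of the flat Hořava–Lifshitz quantum universe:
`Ψ(a,t) = (128σ³/π)^{1/4} (m/(m+2iσt))^{3/2} a exp(-σma²/(m+2iσt))` (principal branch)
satisfies (i) the free Schrödinger equation `i ∂Ψ/∂t = -(1/(2m)) ∂²Ψ/∂a²`,
(ii) the initial condition `Ψ(a,0) = (128σ³/π)^{1/4} a e^{-σa²}`, and
(iii) the Dirichlet boundary condition `Ψ(0,t) = 0`. -/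
theorem flat_universe_wave_packet (m σ : ℝ) (hm : 0 < m) (hσ : 0 < σ)
    (Ψ : ℝ → ℝ → ℂ)
    (hΨ : ∀ a t : ℝ, Ψ a t
      = (((128*σ^3/Real.pi) ^ ((1:ℝ)/4) : ℝ) : ℂ)
        * Complex.exp ((3/2) * Complex.log ((m:ℂ)/((m:ℂ) + 2*Complex.I*(σ:ℂ)*(t:ℂ))))
        * (a:ℂ)
        * Complex.exp (-(σ:ℂ)*(m:ℂ)*(a:ℂ)^2/((m:ℂ) + 2*Complex.I*(σ:ℂ)*(t:ℂ)))) :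
    (∀ a t : ℝ, Complex.I * deriv (fun t' => Ψ a t') t
        = -(1/(2*(m:ℂ))) * deriv (deriv (fun a' => Ψ a' t)) a) ∧
    (∀ a : ℝ, Ψ a 0 = (((128*σ^3/Real.pi) ^ ((1:ℝ)/4) : ℝ) : ℂ) * (a:ℂ)
        * Complex.exp (-(σ:ℂ)*(a:ℂ)^2)) ∧
    (∀ t : ℝ, Ψ 0 t = 0) :=
  flat_universe_wave_packet_general m σ hm Ψ hΨ
end

section
/- Let m > 0, σ > 0, and let Ψ(a,t) = (128σ³/π)^{1/4} · exp((3/2)·Log(m/(m + 2iσt))) · a · exp(-σ m a²/(m + 2iσt)) (principal branch). Then for every t ∈ ℝ the expectation value of the scale factor satisfies ∫₀^∞ a |Ψ(a,t)|² da = (2/m) √(2/(πσ)) · √(m²/4 + σ²t²). -/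
open MeasureTheory Set Complex

/-! With `w = m + 2iσt`, `|Ψ(a,t)|²` is again a real Gaussian profile `a² e^{-βa²}`: the
prefactor `exp((3/2) Log(m/w))` has squared modulus `(m/|w|)³`, and the exponent has real part
`-σm²a²/|w|²`, so `β = 2σm²/|w|²`. The expectation is then the Gaussian moment
`∫₀^∞ a³ e^{-βa²} da = 1/(2β²)`, and `|w| = 2√(m²/4 + σ²t²)`. -/

theorem integral_Ioi_cube_mul_exp_neg_mul_sq {b : ℝ} (hb : 0 < b) :
    ∫ x in Ioi (0 : ℝ), x ^ 3 * Real.exp (-b * x ^ 2) = 1 / (2 * b ^ 2) := by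
  have h := integral_rpow_mul_exp_neg_mul_rpow (p := 2) (q := 3) two_pos (by norm_num) hb
  norm_num [Real.rpow_ofNat, Real.Gamma_two] at h
  simp only [neg_mul, h]
  ring

theorem norm_exp_ofReal_mul_log (r : ℝ) (z : ℂ) :
    ‖exp (r * log z)‖ = Real.exp (r * Real.log ‖z‖) := by
  rw [norm_exp, re_ofReal_mul, log_re]

theorem norm_exp_ofReal_div (x : ℝ) (w : ℂ) :
    ‖exp (x / w)‖ = Real.exp (x * w.re / ‖w‖ ^ 2) := by
  rw [norm_exp, div_re, ofReal_re, ofReal_im, normSq_eq_norm_sq]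
  ring_nf

theorem sq_norm_gaussian_packet {m : ℝ} (hm : 0 < m) {w : ℂ} (hw : w ≠ 0) (A σ a : ℝ) :
    ‖(A : ℂ) * exp ((3 / 2) * log (m / w)) * a * exp (-σ * m * a ^ 2 / w)‖ ^ 2
      = A ^ 2 * (m / ‖w‖) ^ 3
        * (a ^ 2 * Real.exp (-(2 * σ * m * w.re / ‖w‖ ^ 2) * a ^ 2)) := by
  have hr : 0 < m / ‖w‖ := div_pos hm (norm_pos_iff.mpr hw)
  have h32 : (3 / 2 : ℂ) = ((3 / 2 : ℝ) : ℂ) := by push_cast; rfl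
  have hσ : -(σ : ℂ) * m * a ^ 2 = ((-σ * m * a ^ 2 : ℝ) : ℂ) := by push_cast; rfl
  have hlog : Real.exp (3 / 2 * Real.log (m / ‖w‖)) ^ 2 = (m / ‖w‖) ^ 3 := by
    rw [← Real.exp_nat_mul, show ((2 : ℕ) : ℝ) * (3 / 2 * Real.log (m / ‖w‖))
      = (3 : ℕ) * Real.log (m / ‖w‖) by push_cast; ring, Real.exp_nat_mul, Real.exp_log hr]
  rw [h32, hσ, norm_mul, norm_mul, norm_mul, norm_real, norm_real, norm_exp_ofReal_mul_log,
    norm_exp_ofReal_div, norm_div, norm_real, Real.norm_of_nonneg hm.le, mul_pow, mul_pow,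
    mul_pow, hlog, Real.norm_eq_abs, Real.norm_eq_abs, sq_abs, sq_abs, ← Real.exp_nat_mul]
  have hgauss : ((2 : ℕ) : ℝ) * (-σ * m * a ^ 2 * w.re / ‖w‖ ^ 2)
      = -(2 * σ * m * w.re / ‖w‖ ^ 2) * a ^ 2 := by push_cast; ring
  rw [hgauss]
  ring

theorem sq_rpow_one_fourth {x : ℝ} (hx : 0 ≤ x) : (x ^ (1 / 4 : ℝ)) ^ 2 = √x := by
  rw [Real.sqrt_eq_rpow, ← Real.rpow_natCast, ← Real.rpow_mul hx]
  norm_num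

/-- Expectation value of the scale factor in the flat Hořava–Lifshitz quantum
universe: for the evolved Gaussian wave packet `Ψ`,
`⟨a⟩(t) = ∫₀^∞ a |Ψ(a,t)|² da = (2/m) √(2/(πσ)) √(m²/4 + σ²t²)`. -/
theorem flat_universe_scale_factor_expectation (m σ : ℝ) (hm : 0 < m) (hσ : 0 < σ)
    (Ψ : ℝ → ℝ → ℂ)
    (hΨ : ∀ a t : ℝ, Ψ a t
      = (((128*σ^3/Real.pi) ^ ((1:ℝ)/4) : ℝ) : ℂ)
        * Complex.exp ((3/2) * Complex.log ((m:ℂ)/((m:ℂ) + 2*Complex.I*(σ:ℂ)*(t:ℂ))))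
        * (a:ℂ)
        * Complex.exp (-(σ:ℂ)*(m:ℂ)*(a:ℂ)^2/((m:ℂ) + 2*Complex.I*(σ:ℂ)*(t:ℂ)))) :
    ∀ t : ℝ, ∫ a in Set.Ioi (0:ℝ), a * ‖Ψ a t‖ ^ 2
      = (2/m) * Real.sqrt (2/(Real.pi*σ)) * Real.sqrt (m^2/4 + σ^2*t^2) := by
  intro t
  set w : ℂ := m + 2 * I * σ * t with hw
  set s := √(m ^ 2 / 4 + σ ^ 2 * t ^ 2)
  have hs : 0 < s := Real.sqrt_pos.mpr (by positivity)
  have hw_re : w.re = m := by simp [w]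
  have hw_norm : ‖w‖ = 2 * s := by
    have hw_im : w.im = 2 * σ * t := by simp [w]
    rw [norm_def, normSq_apply, hw_re, hw_im,
      show m * m + 2 * σ * t * (2 * σ * t) = 2 ^ 2 * (m ^ 2 / 4 + σ ^ 2 * t ^ 2) by ring,
      Real.sqrt_mul (by positivity), Real.sqrt_sq zero_le_two]
  have hw0 : w ≠ 0 := norm_pos_iff.mp (by rw [hw_norm]; positivity)
  set A : ℝ := (128 * σ ^ 3 / Real.pi) ^ (1 / 4 : ℝ)
  have hA : A ^ 2 = 8 * σ ^ 2 * √(2 / (Real.pi * σ)) := by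
    rw [sq_rpow_one_fourth (by positivity),
      show 128 * σ ^ 3 / Real.pi = (8 * σ ^ 2) ^ 2 * (2 / (Real.pi * σ)) by field_simp; ring,
      Real.sqrt_mul (by positivity), Real.sqrt_sq (by positivity)]
  set β := 2 * σ * m * w.re / ‖w‖ ^ 2 with hβ_def
  have hβ : 0 < β := by rw [hβ_def, hw_re]; positivity
  calc ∫ a in Ioi 0, a * ‖Ψ a t‖ ^ 2
      = ∫ a in Ioi 0, A ^ 2 * (m / ‖w‖) ^ 3 * (a ^ 3 * Real.exp (-β * a ^ 2)) := by
        refine setIntegral_congr_fun measurableSet_Ioi fun a _ => ?_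
        rw [hΨ, ← hw, sq_norm_gaussian_packet hm hw0]
        ring
    _ = A ^ 2 * (m / ‖w‖) ^ 3 * (1 / (2 * β ^ 2)) := by
        rw [integral_const_mul, integral_Ioi_cube_mul_exp_neg_mul_sq hβ]
    _ = 2 / m * √(2 / (Real.pi * σ)) * s := by
        rw [hβ_def, hA, hw_norm, hw_re]
        field_simp
        ring
end

section
/- Let m > 0, σ > 0 and define ⟨a⟩(t) = (2/m) √(2/(πσ)) · √(m²/4 + σ²t²) for t ∈ ℝ. Then: (i) ⟨a⟩(t) > 0 for every t ∈ ℝ, so the flat Hořava–Lifshitz quantum universe is nonsingular (the expectation value of the scale factor never vanishes); and (ii) ⟨a⟩(t)/t → (2/m)√(2σ/π) as t → ∞, so ⟨a⟩(t) grows asymptotically linearly in t, recovering the classical behavior of the radiation-filled flat universe at large times. -/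
/-- Nonsingularity and classical limit of the flat Hořava–Lifshitz quantum universe:
the expectation value `⟨a⟩(t) = (2/m)√(2/(πσ))√(m²/4 + σ²t²)` of the scale factor
(i) never vanishes (it is strictly positive for every `t`), and (ii) satisfies
`⟨a⟩(t)/t → (2/m)√(2σ/π)` as `t → ∞`, i.e. grows asymptotically linearly in `t`. -/
theorem flat_universe_nonsingular (m σ : ℝ) (hm : 0 < m) (hσ : 0 < σ)
    (A : ℝ → ℝ)
    (hA : ∀ t : ℝ, A t = (2/m) * Real.sqrt (2/(Real.pi*σ)) * Real.sqrt (m^2/4 + σ^2*t^2)) :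
    (∀ t : ℝ, 0 < A t) ∧
    Filter.Tendsto (fun t => A t / t) Filter.atTop
      (nhds ((2/m) * Real.sqrt (2*σ/Real.pi))) := by
  have hpi := Real.pi_pos
  constructor
  · intro t
    rw [hA t]
    have h2 : 0 < Real.sqrt (2/(Real.pi*σ)) := Real.sqrt_pos.mpr (by positivity)
    have h3 : 0 < Real.sqrt (m^2/4 + σ^2*t^2) := Real.sqrt_pos.mpr (by positivity)
    positivity
  · set c : ℝ := (2/m) * Real.sqrt (2/(Real.pi*σ)) with hc
    have hinv : Filter.Tendsto (fun t : ℝ => (t^2)⁻¹) Filter.atTop (nhds 0) :=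
      (Filter.tendsto_pow_atTop two_ne_zero).inv_tendsto_atTop
    have h1 : Filter.Tendsto (fun t : ℝ => m^2/4 * (t^2)⁻¹ + σ^2) Filter.atTop
        (nhds (σ^2)) := by
      have := (hinv.const_mul (m^2/4)).add_const (σ^2)
      simpa using this
    have h2 : Filter.Tendsto (fun t : ℝ => c * Real.sqrt (m^2/4 * (t^2)⁻¹ + σ^2))
        Filter.atTop (nhds (c * σ)) := by
      have hs : Filter.Tendsto (fun t : ℝ => Real.sqrt (m^2/4 * (t^2)⁻¹ + σ^2))
          Filter.atTop (nhds σ) := by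
        have := (Real.continuous_sqrt.tendsto (σ^2)).comp h1
        simpa [Function.comp_def, Real.sqrt_sq hσ.le] using this
      exact hs.const_mul c
    have hval : c * σ = (2/m) * Real.sqrt (2*σ/Real.pi) := by
      rw [hc, mul_assoc]
      congr 1
      rw [← Real.sqrt_sq hσ.le, ← Real.sqrt_mul (by positivity)]
      congr 1
      field_simp
      rw [Real.sq_sqrt (by positivity)]
    rw [← hval]
    apply h2.congr'
    filter_upwards [Filter.eventually_gt_atTop (0:ℝ)] with t ht
    rw [hA t, mul_assoc, hc, mul_assoc, mul_div_assoc, mul_div_assoc]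
    congr 1
    congr 1
    rw [show t = Real.sqrt (t^2) from (Real.sqrt_sq ht.le).symm,
      ← Real.sqrt_div (by positivity)]
    · have ht2 : (t:ℝ)^2 ≠ 0 := by positivity
      congr 1
      rw [Real.sq_sqrt (by positivity : (0:ℝ) ≤ t^2), add_div, mul_div_assoc,
        div_self ht2, mul_one, div_eq_mul_inv, div_eq_mul_inv]
end

section
/- Let m > 0, ω > 0, σ > 0, ν ≥ 0 and g_r ∈ ℝ. Define N = [2^{ν+5/2} σ^{ν+3/2}/Γ(ν+3/2)]^{1/2}, F(t) = mω cos(ωt) + 2iσ sin(ωt), B(t) = -(mω/2)·(2σ cos(ωt) + i mω sin(ωt))/F(t), and for a > 0 and t ∈ ℝ with F(t) not a nonpositive real number, Ψ(a,t) = N e^{i g_r t} a^{ν+1} (mω)^{ν+3/2} exp(-(ν+3/2)·Log F(t)) exp(B(t) a²), with Log the principal branch. Then: (i) for all such (a,t), Ψ satisfies the Schrödinger–Wheeler–DeWitt equation i ∂Ψ/∂t = -(1/(2m)) ∂²Ψ/∂a² + (½ m ω² a² - g_r + ν(ν+1)/(2m a²)) Ψ; (ii) Ψ(a,0) = N a^{ν+1}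 e^{-σa²} for all a > 0. -/
/-!
Write `Ψ(a,t) = K e^{i g_r t} F(t)^{-(ν+3/2)} a^{ν+1} e^{B(t) a²}`. The function `F` solves the
oscillator equation `F'' = -ω² F` and `B = (i m / 2) F'/F`, so `L = F'/F` obeys the Riccati
equation `L' = -ω² - L²`. On the spatial side, `f = a^p e^{b a²}` has logarithmic derivative
`p/a + 2ba`, whence `f'' = (p(p-1)/a² + 2(2p+1) b + 4 b² a²) f`. With `p = ν + 1` the
`a⁻²` term is the repulsive inverse-square potential, the `a²` terms match by the Riccati
equation, and the constant terms match because `i (F^{-(ν+3/2)})'/F^{-(ν+3/2)} = -(2ν+3) B/m`.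
At `t = 0`, `F = mω` and `B = -σ`.
-/

open Complex Topology

lemma deriv_deriv_eq_of_hasDerivAt_mul_self {f g : ℝ → ℂ} {g' : ℂ} {s : Set ℝ} {a : ℝ}
    (hs : s ∈ 𝓝 a) (hf : ∀ x ∈ s, HasDerivAt f (g x * f x) x) (hg : HasDerivAt g g' a) :
    deriv (deriv f) a = (g' + g a ^ 2) * f a := by
  have hf' : deriv f =ᶠ[𝓝 a] fun x => g x * f x :=
    Filter.mem_of_superset hs fun x hx => (hf x hx).deriv
  rw [hf'.deriv_eq]
  exact (hg.mul (hf a (mem_of_mem_nhds hs))).deriv.trans (by ring)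

lemma hasDerivAt_rpow_mul_cexp_mul_sq (p : ℝ) (b : ℂ) {x : ℝ} (hx : 0 < x) :
    HasDerivAt (fun y : ℝ => ((y ^ p : ℝ) : ℂ) * exp (b * (y : ℂ) ^ 2))
      ((p / x + 2 * b * x) * (((x ^ p : ℝ) : ℂ) * exp (b * (x : ℂ) ^ 2))) x := by
  have hpow := (Real.hasDerivAt_rpow_const (p := p) (Or.inl hx.ne')).ofReal_comp
  have hexp := (((hasDerivAt_pow 2 (x : ℂ)).const_mul b).cexp).comp_ofReal
  refine (hpow.mul hexp).congr_deriv ?_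
  rw [Real.rpow_sub_one hx.ne']
  have : (x : ℂ) ≠ 0 := ofReal_ne_zero.mpr hx.ne'
  push_cast
  field_simp

lemma deriv_deriv_rpow_mul_cexp_mul_sq (p : ℝ) (b : ℂ) {a : ℝ} (ha : 0 < a) :
    deriv (deriv fun y : ℝ => ((y ^ p : ℝ) : ℂ) * exp (b * (y : ℂ) ^ 2)) a
      = (p * (p - 1) / (a : ℂ) ^ 2 + 2 * (2 * p + 1) * b + 4 * b ^ 2 * (a : ℂ) ^ 2)
        * (((a ^ p : ℝ) : ℂ) * exp (b * (a : ℂ) ^ 2)) := by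
  have hg : HasDerivAt (fun x : ℝ => (p : ℂ) / x + 2 * b * x) (-p / (a : ℂ) ^ 2 + 2 * b) a := by
    have := (((hasDerivAt_inv (ofReal_ne_zero.mpr ha.ne')).const_mul (p : ℂ)).add
      ((hasDerivAt_id (a : ℂ)).const_mul (2 * b))).comp_ofReal
    exact this.congr_deriv (by ring)
  rw [deriv_deriv_eq_of_hasDerivAt_mul_self (Ioi_mem_nhds ha)
    (fun x hx => hasDerivAt_rpow_mul_cexp_mul_sq p b hx) hg]
  have : (a : ℂ) ≠ 0 := ofReal_ne_zero.mpr ha.ne'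
  field_simp
  ring

lemma hasDerivAt_mul_cos_add_mul_sin (α β : ℂ) (ω t : ℝ) :
    HasDerivAt (fun s : ℝ => α * (Real.cos (ω * s) : ℂ) + β * (Real.sin (ω * s) : ℂ))
      (ω * (β * Real.cos (ω * t) - α * Real.sin (ω * t))) t := by
  have hlin : HasDerivAt (fun s : ℝ => ω * s) ω t := by
    simpa using (hasDerivAt_id t).const_mul ω
  have hcos := ((Real.hasDerivAt_cos (ω * t)).comp t hlin).ofReal_comp
  have hsin := ((Real.hasDerivAt_sin (ω * t)).comp t hlin).ofReal_comp
  refine ((hcos.const_mul α).add (hsin.const_mul β)).congr_deriv ?_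
  push_cast
  ring

lemma hasDerivAt_div_of_hasDerivAt_neg_sq_mul {F F' : ℝ → ℂ} {ω : ℂ} {t : ℝ}
    (hF : HasDerivAt F (F' t) t) (hF' : HasDerivAt F' (-ω ^ 2 * F t) t) (ht : F t ≠ 0) :
    HasDerivAt (fun s => F' s / F s) (-ω ^ 2 - (F' t / F t) ^ 2) t := by
  refine (hF'.div hF ht).congr_deriv ?_
  field_simp

lemma hasDerivAt_cexp_mul_cexp_log_mul_cexp {F B : ℝ → ℂ} {F' B' : ℂ} {t : ℝ}
    (g c x : ℂ) (hF : HasDerivAt F F' t) (hB : HasDerivAt B B' t) (ht : F t ∈ slitPlane) :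
    HasDerivAt (fun s : ℝ => exp (I * g * s) * exp (-c * log (F s)) * exp (B s * x))
      ((I * g - c * (F' / F t) + B' * x)
        * (exp (I * g * t) * exp (-c * log (F t)) * exp (B t * x))) t := by
  have h1 := ((hasDerivAt_id (t : ℂ)).const_mul (I * g)).cexp.comp_ofReal
  have h2 := ((hF.clog_real ht).const_mul (-c)).cexp
  have h3 := (hB.mul_const x).cexp
  refine ((h1.mul h2).mul h3).congr_deriv ?_
  simp only [id, Pi.mul_apply]
  ring

lemma ofReal_rpow_mul_cexp_neg_mul_log {x : ℝ} (hx : 0 < x) (c : ℝ) :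
    ((x ^ c : ℝ) : ℂ) * exp (-c * log x) = 1 := by
  rw [ofReal_cpow hx.le, cpow_def_of_ne_zero (ofReal_ne_zero.mpr hx.ne'), ← exp_add]
  ring_nf
  exact exp_zero

noncomputable def harmonicWavePacket (m ν g : ℝ) (K : ℂ) (F F' : ℝ → ℂ) (a t : ℝ) : ℂ :=
  K * exp (I * g * t) * ((a ^ (ν + 1) : ℝ) : ℂ) * exp (-((ν : ℂ) + 3 / 2) * log (F t))
    * exp (I * m / 2 * (F' t / F t) * (a : ℂ) ^ 2)

section harmonicWavePacket

variable {m ω ν g : ℝ} {K : ℂ} {F F' : ℝ → ℂ} {a t : ℝ}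

lemma hasDerivAt_harmonicWavePacket_time (hF : HasDerivAt F (F' t) t)
    (hF' : HasDerivAt F' (-(ω : ℂ) ^ 2 * F t) t) (ht : F t ∈ slitPlane) :
    HasDerivAt (fun s => harmonicWavePacket m ν g K F F' a s)
      ((I * g - ((ν : ℂ) + 3 / 2) * (F' t / F t)
          + I * m / 2 * (-ω ^ 2 - (F' t / F t) ^ 2) * (a : ℂ) ^ 2)
        * harmonicWavePacket m ν g K F F' a t) t := by
  have hL := hasDerivAt_div_of_hasDerivAt_neg_sq_mul hF hF' (slitPlane_ne_zero ht)
  have hfun : (fun s => harmonicWavePacket m ν g K F F' a s) = fun s : ℝ =>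
      (K * ((a ^ (ν + 1) : ℝ) : ℂ)) * (exp (I * g * s) * exp (-((ν : ℂ) + 3 / 2) * log (F s))
        * exp (I * m / 2 * (F' s / F s) * (a : ℂ) ^ 2)) := by
    funext s
    rw [harmonicWavePacket]
    ring
  rw [hfun]
  refine ((hasDerivAt_cexp_mul_cexp_log_mul_cexp g ((ν : ℂ) + 3 / 2) ((a : ℂ) ^ 2)
    hF (hL.const_mul (I * m / 2)) ht).const_mul _).congr_deriv ?_
  rw [harmonicWavePacket]
  ring

lemma deriv_deriv_harmonicWavePacket_space (ha : 0 < a) :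
    deriv (deriv fun x => harmonicWavePacket m ν g K F F' x t) a
      = (((ν + 1 : ℝ) : ℂ) * (((ν + 1 : ℝ) : ℂ) - 1) / (a : ℂ) ^ 2
          + 2 * (2 * ((ν + 1 : ℝ) : ℂ) + 1) * (I * m / 2 * (F' t / F t))
          + 4 * (I * m / 2 * (F' t / F t)) ^ 2 * (a : ℂ) ^ 2)
        * harmonicWavePacket m ν g K F F' a t := by
  have hfun : (fun x => harmonicWavePacket m ν g K F F' x t) = fun x : ℝ =>
      (K * exp (I * g * t) * exp (-((ν : ℂ) + 3 / 2) * log (F t)))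
        * (((x ^ (ν + 1) : ℝ) : ℂ) * exp (I * m / 2 * (F' t / F t) * (x : ℂ) ^ 2)) := by
    funext x
    rw [harmonicWavePacket]
    ring
  rw [hfun, deriv_const_mul_field', deriv_const_mul_field,
    deriv_deriv_rpow_mul_cexp_mul_sq _ _ ha, harmonicWavePacket]
  ring

theorem harmonicWavePacket_schrodinger (hm : m ≠ 0) (hF : HasDerivAt F (F' t) t)
    (hF' : HasDerivAt F' (-(ω : ℂ) ^ 2 * F t) t) (ha : 0 < a) (ht : F t ∈ slitPlane) :
    I * deriv (fun s => harmonicWavePacket m ν g K F F' a s) t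
      = -(1 / (2 * (m : ℂ))) * deriv (deriv fun x => harmonicWavePacket m ν g K F F' x t) a
        + ((m * ω ^ 2 * a ^ 2 / 2 - g + ν * (ν + 1) / (2 * m * a ^ 2) : ℝ) : ℂ)
          * harmonicWavePacket m ν g K F F' a t := by
  rw [(hasDerivAt_harmonicWavePacket_time hF hF' ht).deriv,
    deriv_deriv_harmonicWavePacket_space ha]
  have hmm : (m : ℂ) * (m : ℂ)⁻¹ = 1 := mul_inv_cancel₀ (ofReal_ne_zero.mpr hm)
  push_cast
  linear_combination harmonicWavePacket m ν g K F F' a t * (g - m * ω ^ 2 * a ^ 2 / 2) * I_sq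
    + harmonicWavePacket m ν g K F F' a t
      * (I * ((ν : ℂ) + 3 / 2) * (F' t / F t) + I ^ 2 * m * (F' t / F t) ^ 2 * a ^ 2 / 2) * hmm

end harmonicWavePacket

theorem closed_universe_wave_packet_general (m ω σ ν gr : ℝ)
    (hm : 0 < m) (hω : 0 < ω)
    (N : ℝ)
    (F B : ℝ → ℂ)
    (hF : ∀ t : ℝ, F t = (m:ℂ)*(ω:ℂ)*((Real.cos (ω*t) : ℝ) : ℂ)
        + 2*Complex.I*(σ:ℂ)*((Real.sin (ω*t) : ℝ) : ℂ))
    (hB : ∀ t : ℝ, B t = -((m:ℂ)*(ω:ℂ)/2)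
        * (2*(σ:ℂ)*((Real.cos (ω*t) : ℝ) : ℂ)
            + Complex.I*(m:ℂ)*(ω:ℂ)*((Real.sin (ω*t) : ℝ) : ℂ)) / F t)
    (Ψ : ℝ → ℝ → ℂ)
    (hΨ : ∀ a t : ℝ, Ψ a t = (N:ℂ) * Complex.exp (Complex.I*(gr:ℂ)*(t:ℂ))
        * ((a ^ (ν + 1) : ℝ) : ℂ) * (((m*ω) ^ (ν + 3/2) : ℝ) : ℂ)
        * Complex.exp (-((ν:ℂ) + 3/2) * Complex.log (F t))
        * Complex.exp (B t * (a:ℂ)^2)) :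
    (∀ a > (0:ℝ), ∀ t : ℝ, ¬((F t).im = 0 ∧ (F t).re ≤ 0) →
      Complex.I * deriv (fun t' => Ψ a t') t
        = -(1/(2*(m:ℂ))) * deriv (deriv (fun a' => Ψ a' t)) a
          + ((m*ω^2*a^2/2 - gr + ν*(ν+1)/(2*m*a^2) : ℝ) : ℂ) * Ψ a t) ∧
    (∀ a > (0:ℝ), Ψ a 0 = (N:ℂ) * ((a ^ (ν + 1) : ℝ) : ℂ)
        * Complex.exp (-(σ:ℂ)*(a:ℂ)^2)) := by
  set F' : ℝ → ℂ := fun s => ω * (2 * I * σ * Real.cos (ω * s) - m * ω * Real.sin (ω * s))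
  have hF_deriv (s : ℝ) : HasDerivAt F (F' s) s := by
    rw [show F = _ from funext hF]
    exact hasDerivAt_mul_cos_add_mul_sin _ _ ω s
  have hF'_deriv (s : ℝ) : HasDerivAt F' (-(ω : ℂ) ^ 2 * F s) s := by
    have hF'_eq : F' = fun s : ℝ => (2 * I * σ * ω) * (Real.cos (ω * s) : ℂ)
        + (-(m * ω * ω)) * (Real.sin (ω * s) : ℂ) := funext fun s => by simp only [F']; ring
    rw [hF'_eq, hF]
    exact (hasDerivAt_mul_cos_add_mul_sin _ _ ω s).congr_deriv (by ring)
  have hΨ_eq : Ψ = harmonicWavePacket m ν gr (N * (((m * ω) ^ (ν + 3 / 2) : ℝ) : ℂ)) F F' := by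
    funext a t
    have hBt : B t = I * m / 2 * (F' t / F t) := by
      rw [hB]
      linear_combination -(m * ω * σ * Real.cos (ω * t) / F t) * I_sq
    rw [hΨ, hBt, harmonicWavePacket]
    ring
  constructor
  · intro a ha t ht
    have hslit : F t ∈ slitPlane := by
      rw [mem_slitPlane_iff]
      contrapose! ht
      exact ⟨ht.2, ht.1⟩
    rw [hΨ_eq]
    exact harmonicWavePacket_schrodinger hm.ne' (hF_deriv t) (hF'_deriv t) ha hslit
  · intro a ha
    have hF0 : F 0 = m * ω := by simp [hF]
    have hB0 : B 0 = -σ := by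
      have hm' : (m : ℂ) ≠ 0 := ofReal_ne_zero.mpr hm.ne'
      have hω' : (ω : ℂ) ≠ 0 := ofReal_ne_zero.mpr hω.ne'
      rw [hB, hF0]
      simp only [mul_zero, Real.cos_zero, Real.sin_zero, ofReal_one, ofReal_zero]
      field_simp
      ring
    have hM := ofReal_rpow_mul_cexp_neg_mul_log (mul_pos hm hω) (ν + 3 / 2)
    push_cast at hM
    rw [hΨ, hF0, hB0]
    simp only [ofReal_zero, mul_zero, exp_zero, mul_one]
    linear_combination (N * ((a ^ (ν + 1) : ℝ) : ℂ) * exp (-σ * a ^ 2)) * hM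

/-- The exact solution of the closed Hořava–Lifshitz FLRW Schrödinger–Wheeler–DeWitt
equation: with `N = [2^{ν+5/2}σ^{ν+3/2}/Γ(ν+3/2)]^{1/2}`,
`F(t) = mω cos(ωt) + 2iσ sin(ωt)` and
`B(t) = -(mω/2)(2σ cos(ωt) + i mω sin(ωt))/F(t)`, the function
`Ψ(a,t) = N e^{i g_r t} a^{ν+1} (mω)^{ν+3/2} exp(-(ν+3/2) Log F(t)) exp(B(t) a²)`
(principal branch) satisfies (i) the equation
`i ∂Ψ/∂t = -(1/(2m)) ∂²Ψ/∂a² + (½ m ω² a² - g_r + ν(ν+1)/(2m a²)) Ψ` at every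
`a > 0` and every `t` at which `F(t)` is not a nonpositive real number, and
(ii) the initial condition `Ψ(a,0) = N a^{ν+1} e^{-σa²}` for `a > 0`. -/
theorem closed_universe_wave_packet (m ω σ ν gr : ℝ)
    (hm : 0 < m) (hω : 0 < ω) (hσ : 0 < σ) (hν : 0 ≤ ν)
    (N : ℝ)
    (hN : N = Real.sqrt ((2:ℝ) ^ (ν + 5/2) * σ ^ (ν + 3/2) / Real.Gamma (ν + 3/2)))
    (F B : ℝ → ℂ)
    (hF : ∀ t : ℝ, F t = (m:ℂ)*(ω:ℂ)*((Real.cos (ω*t) : ℝ) : ℂ)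
        + 2*Complex.I*(σ:ℂ)*((Real.sin (ω*t) : ℝ) : ℂ))
    (hB : ∀ t : ℝ, B t = -((m:ℂ)*(ω:ℂ)/2)
        * (2*(σ:ℂ)*((Real.cos (ω*t) : ℝ) : ℂ)
            + Complex.I*(m:ℂ)*(ω:ℂ)*((Real.sin (ω*t) : ℝ) : ℂ)) / F t)
    (Ψ : ℝ → ℝ → ℂ)
    (hΨ : ∀ a t : ℝ, Ψ a t = (N:ℂ) * Complex.exp (Complex.I*(gr:ℂ)*(t:ℂ))
        * ((a ^ (ν + 1) : ℝ) : ℂ) * (((m*ω) ^ (ν + 3/2) : ℝ) : ℂ)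
        * Complex.exp (-((ν:ℂ) + 3/2) * Complex.log (F t))
        * Complex.exp (B t * (a:ℂ)^2)) :
    (∀ a > (0:ℝ), ∀ t : ℝ, ¬((F t).im = 0 ∧ (F t).re ≤ 0) →
      Complex.I * deriv (fun t' => Ψ a t') t
        = -(1/(2*(m:ℂ))) * deriv (deriv (fun a' => Ψ a' t)) a
          + ((m*ω^2*a^2/2 - gr + ν*(ν+1)/(2*m*a^2) : ℝ) : ℂ) * Ψ a t) ∧
    (∀ a > (0:ℝ), Ψ a 0 = (N:ℂ) * ((a ^ (ν + 1) : ℝ) : ℂ)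
        * Complex.exp (-(σ:ℂ)*(a:ℂ)^2)) :=
  closed_universe_wave_packet_general m ω σ ν gr hm hω N F B hF hB Ψ hΨ
end

section
/- Let m > 0, ω > 0, σ > 0, ν ≥ 0, g_r ∈ ℝ, and let Ψ(a,t) = N e^{i g_r t} a^{ν+1} (mω)^{ν+3/2} exp(-(ν+3/2)·Log F(t)) exp(B(t) a²) with N = [2^{ν+5/2} σ^{ν+3/2}/Γ(ν+3/2)]^{1/2}, F(t) = mω cos(ωt) + 2iσ sin(ωt), B(t) = -(mω/2)(2σ cos(ωt) + i mω sin(ωt))/F(t). Then for every t ∈ ℝ such that F(t) is not a nonpositive real number, the expectation value of the scale factor equals ∫₀^∞ a |Ψ(a,t)|² da = [Γ(ν+2)/(√(2σ) Γ(ν+3/2))] · √(4σ² sin²(ωt) + m²ω² cos²(ωt)) / (mω), i.e. ⟨a⟩(t) = (⟨a⟩(0)/(mω)) √(4σ² sin²(ωt) + m²ω² cos²(ωt)). -/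
/-!
The phase `e^{i g_r t}` has modulus one, `‖exp (-(ν + 3/2) log F)‖ = ‖F‖^{-(ν + 3/2)}`, and
`Re B = -σ (mω)² / ‖F‖²`, since the real part of `(2σ cos + i mω sin) · conj F` is
`2σ mω (cos² + sin²)`. Hence `a ‖Ψ‖²` is `C a^{2ν+3} e^{-Q a²}` with `Q = 2σ (mω)² / ‖F‖²`, a Gamma
integral equal to `C Γ(ν+2) / (2 Q^{ν+2})`, and the powers of `‖F‖` collapse to the single factor
`‖F‖ = √(4σ² sin² + m²ω² cos²)`.
-/

open Complex

lemma norm_exp_ofReal_mul_log_s18 (x : ℝ) {z : ℂ} (hz : z ≠ 0) : ‖exp (x * log z)‖ = ‖z‖ ^ x := by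
  rw [← norm_cpow_real, cpow_def_of_ne_zero hz, mul_comm]

lemma mul_norm_sq_wavePacket (ν : ℝ) {N P a : ℝ} {u z b : ℂ} (hP : 0 ≤ P) (ha : 0 < a)
    (hu : ‖u‖ = 1) (hz : z ≠ 0) :
    a * ‖(N : ℂ) * u * ((a ^ (ν + 1) : ℝ) : ℂ) * ((P ^ (ν + 3/2) : ℝ) : ℂ)
        * exp (-((ν : ℂ) + 3/2) * log z) * exp (b * (a : ℂ) ^ 2)‖ ^ 2
      = N ^ 2 * P ^ (2 * ν + 3) * ‖z‖ ^ (-(2 * ν + 3))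
        * (a ^ (2 * ν + 3) * Real.exp (2 * b.re * a ^ (2 : ℝ))) := by
  have hexp : -((ν : ℂ) + 3/2) = ((-(ν + 3/2) : ℝ) : ℂ) := by push_cast; ring
  have hsq : ∀ {x : ℝ} (y : ℝ), 0 ≤ x → (x ^ y) ^ 2 = x ^ (2 * y) := fun y hx => by
    rw [mul_comm, Real.rpow_mul hx, Real.rpow_two]
  have hre : (b * (a : ℂ) ^ 2).re = b.re * a ^ (2 : ℝ) := by
    rw [Real.rpow_two, ← ofReal_pow, re_mul_ofReal]
  simp only [norm_mul, mul_pow, norm_real, Real.norm_eq_abs, sq_abs, hu, hexp,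
    norm_exp_ofReal_mul_log_s18 _ hz, norm_exp, hre, hsq _ hP, hsq _ ha.le, hsq _ (norm_nonneg z),
    ← Real.exp_nat_mul]
  have hpow : a ^ (1 : ℝ) * a ^ (2 * (ν + 1)) = a ^ (2 * ν + 3) := by
    rw [← Real.rpow_add ha]; ring_nf
  rw [← hpow, Real.rpow_one]; ring_nf

lemma normSq_mul_add_I_mul (m ω σ c s : ℝ) :
    normSq ((m : ℂ) * ω * c + 2 * I * σ * s) = 4 * σ ^ 2 * s ^ 2 + m ^ 2 * ω ^ 2 * c ^ 2 := by
  simp only [normSq_apply, add_re, add_im, mul_re, mul_im, ofReal_re, ofReal_im, re_ofNat, im_ofNat,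
    I_re, I_im]
  ring

lemma re_div_mul_add_I_mul (m ω σ c s : ℝ) (hcs : s ^ 2 + c ^ 2 = 1) :
    (-((m : ℂ) * ω / 2) * (2 * σ * c + I * m * ω * s) / (m * ω * c + 2 * I * σ * s)).re
      = -(σ * (m * ω) ^ 2) / normSq ((m : ℂ) * ω * c + 2 * I * σ * s) := by
  rw [div_re, ← add_div]
  congr 1
  simp only [neg_mul, neg_re, neg_im, add_re, add_im, mul_re, mul_im, div_ofNat_re, div_ofNat_im,
    ofReal_re, ofReal_im, re_ofNat, im_ofNat, I_re, I_im]
  linear_combination -(σ * m ^ 2 * ω ^ 2) * hcs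

lemma normalized_moment_prefactor_eq {σ P R : ℝ} (hσ : 0 < σ) (hP : 0 < P) (hR : 0 < R) (ν : ℝ) :
    2 ^ (ν + 5/2) * σ ^ (ν + 3/2) * P ^ (2 * ν + 3) * R ^ (-(2 * ν + 3))
        * (2 * σ * P ^ 2 / R ^ 2) ^ (-(ν + 2)) / 2
      = R / (Real.sqrt (2 * σ) * P) := by
  have hL : 0 < 2 ^ (ν + 5/2) * σ ^ (ν + 3/2) * P ^ (2 * ν + 3) * R ^ (-(2 * ν + 3))
        * (2 * σ * P ^ 2 / R ^ 2) ^ (-(ν + 2)) / 2 := by positivity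
  rw [← Real.exp_log hL, ← Real.exp_log (by positivity : 0 < R / (Real.sqrt (2 * σ) * P))]
  congr 1
  simp (disch := positivity) only [Real.log_mul, Real.log_div, Real.log_rpow, Real.log_sqrt,
    Real.log_pow]
  push_cast
  ring

/-- Expectation value of the scale factor of the closed Hořava–Lifshitz FLRW quantum
universe: for the evolved wave packet `Ψ` and every `t` at which
`F(t) = mω cos(ωt) + 2iσ sin(ωt)` is not a nonpositive real number,
`⟨a⟩(t) = ∫₀^∞ a |Ψ(a,t)|² da
  = [Γ(ν+2)/(√(2σ)Γ(ν+3/2))] √(4σ² sin²(ωt) + m²ω² cos²(ωt))/(mω)`,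
i.e. `⟨a⟩(t) = (⟨a⟩(0)/(mω)) √(4σ² sin²(ωt) + m²ω² cos²(ωt))`. -/
theorem closed_universe_scale_factor_expectation (m ω σ ν gr : ℝ)
    (hm : 0 < m) (hω : 0 < ω) (hσ : 0 < σ) (hν : 0 ≤ ν)
    (N : ℝ)
    (hN : N = Real.sqrt ((2:ℝ) ^ (ν + 5/2) * σ ^ (ν + 3/2) / Real.Gamma (ν + 3/2)))
    (F B : ℝ → ℂ)
    (hF : ∀ t : ℝ, F t = (m:ℂ)*(ω:ℂ)*((Real.cos (ω*t) : ℝ) : ℂ)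
        + 2*Complex.I*(σ:ℂ)*((Real.sin (ω*t) : ℝ) : ℂ))
    (hB : ∀ t : ℝ, B t = -((m:ℂ)*(ω:ℂ)/2)
        * (2*(σ:ℂ)*((Real.cos (ω*t) : ℝ) : ℂ)
            + Complex.I*(m:ℂ)*(ω:ℂ)*((Real.sin (ω*t) : ℝ) : ℂ)) / F t)
    (Ψ : ℝ → ℝ → ℂ)
    (hΨ : ∀ a t : ℝ, Ψ a t = (N:ℂ) * Complex.exp (Complex.I*(gr:ℂ)*(t:ℂ))
        * ((a ^ (ν + 1) : ℝ) : ℂ) * (((m*ω) ^ (ν + 3/2) : ℝ) : ℂ)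
        * Complex.exp (-((ν:ℂ) + 3/2) * Complex.log (F t))
        * Complex.exp (B t * (a:ℂ)^2)) :
    ∀ t : ℝ, ¬((F t).im = 0 ∧ (F t).re ≤ 0) →
      ∫ a in Set.Ioi (0:ℝ), a * ‖Ψ a t‖ ^ 2
        = (Real.Gamma (ν + 2) / (Real.sqrt (2*σ) * Real.Gamma (ν + 3/2)))
          * Real.sqrt (4*σ^2*Real.sin (ω*t)^2 + m^2*ω^2*Real.cos (ω*t)^2) / (m*ω) := by
  intro t ht
  have hF0 : F t ≠ 0 := fun h => ht ⟨by simp [h], by simp [h]⟩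
  have hnormSq : normSq (F t) = 4*σ^2*Real.sin (ω*t)^2 + m^2*ω^2*Real.cos (ω*t)^2 := by
    rw [hF, normSq_mul_add_I_mul]
  have hR : 0 < ‖F t‖ := norm_pos_iff.mpr hF0
  have hBre : 2 * (B t).re = -(2 * σ * (m * ω) ^ 2 / ‖F t‖ ^ 2) := by
    rw [hB, hF, re_div_mul_add_I_mul _ _ _ _ _ (Real.sin_sq_add_cos_sq _), ← hF, normSq_eq_norm_sq]
    ring
  have hpoint : ∀ a ∈ Set.Ioi (0:ℝ), a * ‖Ψ a t‖ ^ 2 = N ^ 2 * (m * ω) ^ (2 * ν + 3)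
      * ‖F t‖ ^ (-(2 * ν + 3)) * (a ^ (2 * ν + 3)
        * Real.exp (-(2 * σ * (m * ω) ^ 2 / ‖F t‖ ^ 2) * a ^ (2 : ℝ))) := fun a ha => by
    rw [hΨ, mul_norm_sq_wavePacket ν (by positivity) ha (by simp [norm_exp]) hF0, hBre]
  rw [MeasureTheory.setIntegral_congr_fun measurableSet_Ioi hpoint,
    MeasureTheory.integral_const_mul,
    _root_.integral_rpow_mul_exp_neg_mul_rpow two_pos (by linarith) (by positivity),
    show -(2 * ν + 3 + 1) / 2 = -(ν + 2) by ring, show (2 * ν + 3 + 1) / 2 = ν + 2 by ring,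
    ← hnormSq, ← norm_def, hN, Real.sq_sqrt (by positivity)]
  linear_combination Real.Gamma (ν + 2) / Real.Gamma (ν + 3/2)
    * normalized_moment_prefactor_eq hσ (mul_pos hm hω) hR ν
end

section
/- Let m > 0, ω > 0, σ > 0, ν ≥ 0 and define ⟨a⟩(t) = [Γ(ν+2)/(√(2σ) Γ(ν+3/2))] · √(4σ² sin²(ωt) + m²ω² cos²(ωt)) / (mω). Then for every t ∈ ℝ, ⟨a⟩(t) ≥ (min(2σ, mω)/(mω)) · Γ(ν+2)/(√(2σ) Γ(ν+3/2)) > 0. In particular ⟨a⟩(t) never vanishes, so the closed Hořava–Lifshitz quantum universe is nonsingular: the big-bang singularity a = 0 is excluded and the universe undergoes a periodic bounce. -/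
/-! The radicand `4σ² sin²(ωt) + m²ω² cos²(ωt)` is a convex combination of `(2σ)²` and `(mω)²`,
so its square root never drops below `min(2σ, mω)`; the Gamma-function prefactor is positive
because `ν + 3/2` and `ν + 2` are. -/

open Real

lemma min_sq_le_add_mul_sq {a b p q : ℝ} (ha : 0 ≤ a) (hb : 0 ≤ b) (hp : 0 ≤ p) (hq : 0 ≤ q)
    (hpq : p + q = 1) : min a b ^ 2 ≤ p * a ^ 2 + q * b ^ 2 := by
  have hmin : 0 ≤ min a b := le_min ha hb
  have hle_a : min a b ^ 2 ≤ a ^ 2 := pow_le_pow_left₀ hmin (min_le_left a b) 2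
  have hle_b : min a b ^ 2 ≤ b ^ 2 := pow_le_pow_left₀ hmin (min_le_right a b) 2
  calc min a b ^ 2 = p * min a b ^ 2 + q * min a b ^ 2 := by rw [← add_mul, hpq, one_mul]
    _ ≤ p * a ^ 2 + q * b ^ 2 := by gcongr

lemma min_le_sqrt_sq_mul_sin_sq_add_sq_mul_cos_sq {a b : ℝ} (ha : 0 ≤ a) (hb : 0 ≤ b) (x : ℝ) :
    min a b ≤ √(a ^ 2 * sin x ^ 2 + b ^ 2 * cos x ^ 2) := by
  have h := min_sq_le_add_mul_sq ha hb (sq_nonneg (sin x)) (sq_nonneg (cos x)) (sin_sq_add_cos_sq x)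
  exact le_sqrt_of_sq_le (by linarith)

/-- Nonsingularity of the closed Hořava–Lifshitz quantum universe: the expectation
value `⟨a⟩(t) = [Γ(ν+2)/(√(2σ)Γ(ν+3/2))] √(4σ² sin²(ωt) + m²ω² cos²(ωt))/(mω)` of the
scale factor is bounded below by the positive constant
`(min(2σ, mω)/(mω)) Γ(ν+2)/(√(2σ)Γ(ν+3/2))`, so it never vanishes: the big-bang
singularity `a = 0` is excluded and the universe undergoes a periodic bounce. -/
theorem closed_universe_nonsingular (m ω σ ν : ℝ)
    (hm : 0 < m) (hω : 0 < ω) (hσ : 0 < σ) (hν : 0 ≤ ν)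
    (A : ℝ → ℝ)
    (hA : ∀ t : ℝ, A t = (Real.Gamma (ν + 2) / (Real.sqrt (2*σ) * Real.Gamma (ν + 3/2)))
        * Real.sqrt (4*σ^2*Real.sin (ω*t)^2 + m^2*ω^2*Real.cos (ω*t)^2) / (m*ω)) :
    (∀ t : ℝ, A t ≥ (min (2*σ) (m*ω) / (m*ω))
        * (Real.Gamma (ν + 2) / (Real.sqrt (2*σ) * Real.Gamma (ν + 3/2)))) ∧
    0 < (min (2*σ) (m*ω) / (m*ω))
        * (Real.Gamma (ν + 2) / (Real.sqrt (2*σ) * Real.Gamma (ν + 3/2))) := by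
  have hmω : 0 < m * ω := mul_pos hm hω
  have hprefactor : 0 < Gamma (ν + 2) / (√(2 * σ) * Gamma (ν + 3/2)) := by
    have := Gamma_pos_of_pos (show 0 < ν + 2 by linarith)
    have := Gamma_pos_of_pos (show 0 < ν + 3/2 by linarith)
    have := sqrt_pos.mpr (show 0 < 2 * σ by linarith)
    positivity
  refine ⟨fun t => ?_, mul_pos (div_pos (lt_min (by linarith) hmω) hmω) hprefactor⟩
  have hbound := min_le_sqrt_sq_mul_sin_sq_add_sq_mul_cos_sq (by linarith : 0 ≤ 2 * σ) hmω.le (ω * t)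
  calc min (2 * σ) (m * ω) / (m * ω) * (Gamma (ν + 2) / (√(2 * σ) * Gamma (ν + 3/2)))
      ≤ √((2 * σ) ^ 2 * sin (ω * t) ^ 2 + (m * ω) ^ 2 * cos (ω * t) ^ 2) / (m * ω)
        * (Gamma (ν + 2) / (√(2 * σ) * Gamma (ν + 3/2))) := by gcongr
    _ = A t := by rw [hA t]; ring_nf
end
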